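/- Let R be a commutative ring and C = R[x,y]/(x², y², xy). Let π₁ : C → R[x]/(x²) and π₂ : C → R[y]/(y²) be the R-algebra homomorphisms sending y to 0 and x to 0 respectively. Then for any p ∈ R[x]/(x²) and q ∈ R[y]/(y²) whose images in R under the substitutions x ↦ 0 and y ↦ 0 coincide, there exists a unique c ∈ C with π₁(c) = p and π₂(c) = q. -/

import Mathlib

open MvPolynomial

/-- The ideal `(x², y², xy)` of `R[x,y]`, so that the quotient is the function algebra `C`
of the infinitesimal object `D²{(1,2)} = D(2)`. -/
noncomputable def idealC (R : Type*) [CommRing R] : Ideal (MvPolynomial (Fin 2) R) :=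
  Ideal.span {X 0 ^ 2, X 1 ^ 2, X 0 * X 1}

/-- The ideal `(x²)` of the univariate polynomial ring `R[x]`, so that the quotient is the
function algebra of `D`. -/
noncomputable def idealD (R : Type*) [CommRing R] : Ideal (Polynomial R) :=
  Ideal.span {Polynomial.X ^ 2}

/-! Every product of two generators vanishes in `C`, so `C` is spanned by `1, x, y`, and
`R[x]/(x²)` is free on `1, x`. In these coordinates `π₁` and `π₂` send `a + b x + e y` to
`a + b x` and `a + e y`, while `ε₁`, `ε₂` keep only the constant term; the compatibility
condition is thus exactly that the constant terms of `p` and `q` agree, and then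
`c = a + b x + e y` is forced coordinate by coordinate. -/

section

variable {R : Type*} [CommRing R]

namespace idealD

lemma mk_C_add_C_mul_X (a b : R) :
    Ideal.Quotient.mk (idealD R) (Polynomial.C a + Polynomial.C b * Polynomial.X) =
      algebraMap R _ a + b • Ideal.Quotient.mk (idealD R) Polynomial.X := by
  rw [← Ideal.Quotient.mk_algebraMap, Polynomial.algebraMap_eq, ← Ideal.Quotient.mkₐ_eq_mk R,
    ← map_smul, ← map_add, Polynomial.smul_eq_C_mul]

lemma exists_eq_algebraMap_add_smul (p : Polynomial R ⧸ idealD R) :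
    ∃ a b : R, p = algebraMap R _ a + b • Ideal.Quotient.mk (idealD R) Polynomial.X := by
  obtain ⟨f, rfl⟩ := Ideal.Quotient.mk_surjective p
  refine ⟨f.coeff 0, f.coeff 1, ?_⟩
  rw [← mk_C_add_C_mul_X, Ideal.Quotient.mk_eq_mk_iff_sub_mem, idealD,
    Ideal.mem_span_singleton, Polynomial.X_pow_dvd_iff]
  intro d hd
  interval_cases d <;> simp

lemma algebraMap_add_smul_inj {a b a' b' : R} :
    algebraMap R (Polynomial R ⧸ idealD R) a + b • Ideal.Quotient.mk (idealD R) Polynomial.X =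
      algebraMap R _ a' + b' • Ideal.Quotient.mk (idealD R) Polynomial.X ↔ a = a' ∧ b = b' := by
  refine ⟨fun h => ?_, by rintro ⟨rfl, rfl⟩; rfl⟩
  rw [← mk_C_add_C_mul_X, ← mk_C_add_C_mul_X, Ideal.Quotient.mk_eq_mk_iff_sub_mem,
    idealD, Ideal.mem_span_singleton, Polynomial.X_pow_dvd_iff] at h
  have h₀ := h 0 (by norm_num)
  have h₁ := h 1 (by norm_num)
  simp only [Polynomial.coeff_sub, Polynomial.coeff_add, Polynomial.coeff_C_mul,
    Polynomial.coeff_X_zero, Polynomial.coeff_X_one, Polynomial.coeff_C, mul_zero, mul_one,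
    add_zero, zero_add, one_ne_zero, if_false, sub_eq_zero] at h₀ h₁
  exact ⟨h₀, h₁⟩

end idealD

namespace idealC

lemma mk_X_mul_mk_X (i j : Fin 2) :
    Ideal.Quotient.mk (idealC R) (X i) * Ideal.Quotient.mk (idealC R) (X j) = 0 := by
  rw [← map_mul, Ideal.Quotient.eq_zero_iff_mem, idealC]
  apply Ideal.subset_span
  fin_cases i <;> fin_cases j <;> simp [sq, mul_comm]

lemma exists_eq_algebraMap_add_smul_add_smul (c : MvPolynomial (Fin 2) R ⧸ idealC R) :
    ∃ a b e : R, c = algebraMap R _ a + b • Ideal.Quotient.mk (idealC R) (X 0) +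
      e • Ideal.Quotient.mk (idealC R) (X 1) := by
  obtain ⟨g, rfl⟩ := Ideal.Quotient.mk_surjective c
  induction g using MvPolynomial.induction_on with
  | C a => exact ⟨a, 0, 0, by rw [← algebraMap_eq, Ideal.Quotient.mk_algebraMap]; simp⟩
  | add f g hf hg =>
    obtain ⟨a, b, e, hf⟩ := hf
    obtain ⟨a', b', e', hg⟩ := hg
    exact ⟨a + a', b + b', e + e', by rw [map_add, hf, hg]; simp only [map_add, add_smul]; abel⟩
  | mul_X f i hf =>
    obtain ⟨a, b, e, hf⟩ := hf
    have hfX : Ideal.Quotient.mk (idealC R) (f * X i) =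
        a • Ideal.Quotient.mk (idealC R) (X i) := by
      simp only [map_mul, hf, add_mul, smul_mul_assoc, mk_X_mul_mk_X, smul_zero, add_zero,
        Algebra.algebraMap_eq_smul_one, one_mul]
    match i, hfX with
    | 0, hfX => exact ⟨0, a, 0, by rw [hfX]; simp⟩
    | 1, hfX => exact ⟨0, 0, a, by rw [hfX]; simp⟩

end idealC

end

/-- Let `C = R[x,y]/(x², y², xy)` and let `π₁ : C → R[x]/(x²)`, `π₂ : C → R[y]/(y²)` be the
`R`-algebra homomorphisms sending `y` to `0` and `x` to `0` respectively, and let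
`ε₁ : R[x]/(x²) → R`, `ε₂ : R[y]/(y²) → R` be the substitutions `x ↦ 0`, `y ↦ 0`.
Then for any `p`, `q` with `ε₁ p = ε₂ q` there exists a unique `c ∈ C` with
`π₁ c = p` and `π₂ c = q`. -/
theorem quasiColimit_amalgamated_axes {R : Type*} [CommRing R]
    (π₁ : (MvPolynomial (Fin 2) R ⧸ idealC R) →ₐ[R] (Polynomial R ⧸ idealD R))
    (π₂ : (MvPolynomial (Fin 2) R ⧸ idealC R) →ₐ[R] (Polynomial R ⧸ idealD R))
    (h₁x : π₁ (Ideal.Quotient.mk (idealC R) (X 0)) = Ideal.Quotient.mk (idealD R) Polynomial.X)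
    (h₁y : π₁ (Ideal.Quotient.mk (idealC R) (X 1)) = 0)
    (h₂x : π₂ (Ideal.Quotient.mk (idealC R) (X 0)) = 0)
    (h₂y : π₂ (Ideal.Quotient.mk (idealC R) (X 1)) = Ideal.Quotient.mk (idealD R) Polynomial.X)
    (ε₁ ε₂ : (Polynomial R ⧸ idealD R) →ₐ[R] R)
    (hε₁ : ε₁ (Ideal.Quotient.mk (idealD R) Polynomial.X) = 0)
    (hε₂ : ε₂ (Ideal.Quotient.mk (idealD R) Polynomial.X) = 0)
    (p q : Polynomial R ⧸ idealD R) (h : ε₁ p = ε₂ q) :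
    ∃! c : MvPolynomial (Fin 2) R ⧸ idealC R, π₁ c = p ∧ π₂ c = q := by
  obtain ⟨a, b, rfl⟩ := idealD.exists_eq_algebraMap_add_smul p
  obtain ⟨a', e, rfl⟩ := idealD.exists_eq_algebraMap_add_smul q
  obtain rfl : a = a' := by simpa [hε₁, hε₂] using h
  set x := Ideal.Quotient.mk (idealC R) (X 0 : MvPolynomial (Fin 2) R)
  set y := Ideal.Quotient.mk (idealC R) (X 1 : MvPolynomial (Fin 2) R)
  set t := Ideal.Quotient.mk (idealD R) (Polynomial.X : Polynomial R)
  have hπ₁ (a b e : R) : π₁ (algebraMap R _ a + b • x + e • y) = algebraMap R _ a + b • t := by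
    simp [h₁x, h₁y]
  have hπ₂ (a b e : R) : π₂ (algebraMap R _ a + b • x + e • y) = algebraMap R _ a + e • t := by
    simp [h₂x, h₂y]
  refine ⟨algebraMap R _ a + b • x + e • y, ⟨hπ₁ a b e, hπ₂ a b e⟩, ?_⟩
  rintro c ⟨hc₁, hc₂⟩
  obtain ⟨a₀, b₀, e₀, rfl⟩ := idealC.exists_eq_algebraMap_add_smul_add_smul c
  obtain ⟨rfl, rfl⟩ := idealD.algebraMap_add_smul_inj.mp ((hπ₁ a₀ b₀ e₀).symm.trans hc₁)
  obtain ⟨-, rfl⟩ := idealD.algebraMap_add_smul_inj.mp ((hπ₂ a₀ b₀ e₀).symm.trans hc₂)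
  rfl
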